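/- arXiv:1802.07191 — 4 statements merged into one kernel-verified Lean document; each statement's English description precedes it below -/
import Mathlib

section
/- Let U ∈ ℝ^{n₁×n₂}, V ∈ ℝ^{n₂×n₃}, W ∈ ℝ^{n₁×n₃} be cost matrices satisfying W(i,k) ≤ U(i,j) + V(j,k) for all i,j,k. Let P, Q be transport plans as in the gluing lemma (with common middle marginal y₂ > 0) and R = P·diag(1/y₂)·Q the glued plan. Then ⟨R, W⟩ ≤ ⟨P, U⟩ + ⟨Q, V⟩, where ⟨·,·⟩ is the Frobenius inner product. -/
/-- If the cost matrices satisfy the componentwise triangle inequality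
`W i k ≤ U i j + V j k`, then the Frobenius cost of the glued plan
`R = P · diag(1/y₂) · Q` is at most the sum of the costs of `P` and `Q`. -/
theorem glued_plan_cost_le {n₁ n₂ n₃ : ℕ}
    (y₁ : Fin n₁ → ℝ) (y₂ : Fin n₂ → ℝ) (y₃ : Fin n₃ → ℝ)
    (hy₂ : ∀ j, 0 < y₂ j)
    (U : Fin n₁ → Fin n₂ → ℝ) (V : Fin n₂ → Fin n₃ → ℝ) (W : Fin n₁ → Fin n₃ → ℝ)
    (htri : ∀ i j k, W i k ≤ U i j + V j k)
    (P : Fin n₁ → Fin n₂ → ℝ) (Q : Fin n₂ → Fin n₃ → ℝ)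
    (hP0 : ∀ i j, 0 ≤ P i j)
    (hProw : ∀ i, ∑ j, P i j = y₁ i)
    (hPcol : ∀ j, ∑ i, P i j = y₂ j)
    (hQ0 : ∀ j k, 0 ≤ Q j k)
    (hQrow : ∀ j, ∑ k, Q j k = y₂ j)
    (hQcol : ∀ k, ∑ j, Q j k = y₃ k) :
    (∑ i, ∑ k, (∑ j, P i j * Q j k / y₂ j) * W i k) ≤
      (∑ i, ∑ j, P i j * U i j) + (∑ j, ∑ k, Q j k * V j k) := by
  have key : (∑ i, ∑ k, (∑ j, P i j * Q j k / y₂ j) * W i k) ≤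
      ∑ i, ∑ k, ∑ j, (P i j * Q j k / y₂ j * U i j + P i j * Q j k / y₂ j * V j k) := by
    apply Finset.sum_le_sum; intro i _
    apply Finset.sum_le_sum; intro k _
    rw [Finset.sum_mul]
    apply Finset.sum_le_sum; intro j _
    have h0 : 0 ≤ P i j * Q j k / y₂ j :=
      div_nonneg (mul_nonneg (hP0 i j) (hQ0 j k)) (hy₂ j).le
    calc P i j * Q j k / y₂ j * W i k
        ≤ P i j * Q j k / y₂ j * (U i j + V j k) :=
          mul_le_mul_of_nonneg_left (htri i j k) h0
      _ = P i j * Q j k / y₂ j * U i j + P i j * Q j k / y₂ j * V j k := by ring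
  refine key.trans_eq ?_
  have hU : ∀ i j, (∑ k, P i j * Q j k / y₂ j * U i j) = P i j * U i j := by
    intro i j
    have : ∀ k, P i j * Q j k / y₂ j * U i j = Q j k * (P i j * U i j / y₂ j) := by
      intro k; ring
    simp only [this, ← Finset.sum_mul, hQrow]
    rw [mul_comm, div_mul_cancel₀ _ (hy₂ j).ne']
  have hV : ∀ j k, (∑ i, P i j * Q j k / y₂ j * V j k) = Q j k * V j k := by
    intro j k
    have : ∀ i, P i j * Q j k / y₂ j * V j k = P i j * (Q j k * V j k / y₂ j) := by
      intro i; ring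
    simp only [this, ← Finset.sum_mul, hPcol]
    rw [mul_comm, div_mul_cancel₀ _ (hy₂ j).ne']
  simp only [Finset.sum_add_distrib]
  congr 1
  · calc ∑ i, ∑ k, ∑ j, P i j * Q j k / y₂ j * U i j
        = ∑ i, ∑ j, ∑ k, P i j * Q j k / y₂ j * U i j := by
          exact Finset.sum_congr rfl fun i _ => Finset.sum_comm
      _ = ∑ i, ∑ j, P i j * U i j := by
          exact Finset.sum_congr rfl fun i _ => Finset.sum_congr rfl fun j _ => hU i j
  · calc ∑ i, ∑ k, ∑ j, P i j * Q j k / y₂ j * V j k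
        = ∑ i, ∑ j, ∑ k, P i j * Q j k / y₂ j * V j k :=
          Finset.sum_congr rfl fun i _ => Finset.sum_comm
      _ = ∑ j, ∑ i, ∑ k, P i j * Q j k / y₂ j * V j k := Finset.sum_comm
      _ = ∑ j, ∑ k, ∑ i, P i j * Q j k / y₂ j * V j k :=
          Finset.sum_congr rfl fun j _ => Finset.sum_comm
      _ = ∑ j, ∑ k, Q j k * V j k := by
          exact Finset.sum_congr rfl fun j _ => Finset.sum_congr rfl fun k _ => hV j k
end

section
/- Define d(C, y₁, y₂) as the infimum of ⟨Z, C⟩ over nonnegative matrices Z ∈ ℝ^{n₁×n₂} with row sums y₁ and column sums y₂ (assuming Σy₁ = Σy₂, y₁,y₂ ≥ 0). If the family of cost matrices satisfies the componentwise triangle inequality W(i,k) ≤ U(i,j) + V(j,k) and y₂ > 0, then d(W, y₁, y₃) ≤ d(U, y₁, y₂) + d(V, y₂, y₃). -/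
/-- The optimal transport cost: the infimum of `⟨Z, C⟩` over nonnegative matrices `Z`
with row sums `y₁` and column sums `y₂`. -/
noncomputable def otCost {n₁ n₂ : ℕ} (C : Fin n₁ → Fin n₂ → ℝ)
    (y₁ : Fin n₁ → ℝ) (y₂ : Fin n₂ → ℝ) : ℝ :=
  sInf {c | ∃ Z : Fin n₁ → Fin n₂ → ℝ,
    (∀ i j, 0 ≤ Z i j) ∧ (∀ i, ∑ j, Z i j = y₁ i) ∧ (∀ j, ∑ i, Z i j = y₂ j) ∧
    c = ∑ i, ∑ j, Z i j * C i j}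

lemma otFeas_bddBelow {n₁ n₂ : ℕ} (C : Fin n₁ → Fin n₂ → ℝ)
    (y₁ : Fin n₁ → ℝ) (y₂ : Fin n₂ → ℝ) (hy₁ : ∀ i, 0 ≤ y₁ i) :
    BddBelow {c | ∃ Z : Fin n₁ → Fin n₂ → ℝ,
      (∀ i j, 0 ≤ Z i j) ∧ (∀ i, ∑ j, Z i j = y₁ i) ∧ (∀ j, ∑ i, Z i j = y₂ j) ∧
      c = ∑ i, ∑ j, Z i j * C i j} := by
  refine ⟨∑ i, ∑ j, min 0 (y₁ i * C i j), ?_⟩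
  rintro c ⟨Z, hZ, hrow, hcol, rfl⟩
  refine Finset.sum_le_sum fun i _ => Finset.sum_le_sum fun j _ => ?_
  have hZle : Z i j ≤ y₁ i := by
    rw [← hrow i]
    exact Finset.single_le_sum (fun k _ => hZ i k) (Finset.mem_univ j)
  rcases le_or_gt 0 (C i j) with h | h
  · exact le_trans (min_le_left _ _) (mul_nonneg (hZ i j) h)
  · exact le_trans (min_le_right _ _) (mul_le_mul_of_nonpos_right hZle h.le)

lemma otFeas_nonempty {n₁ n₂ : ℕ} (C : Fin n₁ → Fin n₂ → ℝ)
    (y₁ : Fin n₁ → ℝ) (y₂ : Fin n₂ → ℝ) (h₁ : ∀ i, 0 ≤ y₁ i) (h₂ : ∀ j, 0 ≤ y₂ j)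
    (hbal : ∑ i, y₁ i = ∑ j, y₂ j) :
    Set.Nonempty {c | ∃ Z : Fin n₁ → Fin n₂ → ℝ,
      (∀ i j, 0 ≤ Z i j) ∧ (∀ i, ∑ j, Z i j = y₁ i) ∧ (∀ j, ∑ i, Z i j = y₂ j) ∧
      c = ∑ i, ∑ j, Z i j * C i j} := by
  set m := ∑ j, y₂ j with hm
  have hm0 : 0 ≤ m := Finset.sum_nonneg fun j _ => h₂ j
  rcases eq_or_lt_of_le hm0 with h | h
  · -- m = 0, everything is zero
    have hy2 : ∀ j, y₂ j = 0 := by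
      intro j
      have := (Finset.sum_eq_zero_iff_of_nonneg (fun j _ => h₂ j)).mp h.symm
      exact this j (Finset.mem_univ j)
    have hy1 : ∀ i, y₁ i = 0 := by
      intro i
      have hsum : ∑ i, y₁ i = 0 := hbal.trans h.symm
      have := (Finset.sum_eq_zero_iff_of_nonneg (fun i _ => h₁ i)).mp hsum
      exact this i (Finset.mem_univ i)
    exact ⟨0, fun _ _ => 0, fun _ _ => le_refl 0,
      fun i => by simp [hy1 i], fun j => by simp [hy2 j], by simp⟩
  · refine ⟨∑ i, ∑ j, (y₁ i / m * y₂ j) * C i j, fun i j => y₁ i / m * y₂ j, ?_, ?_, ?_, rfl⟩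
    · exact fun i j => mul_nonneg (div_nonneg (h₁ i) hm0) (h₂ j)
    · intro i
      rw [← Finset.mul_sum, ← hm, div_mul_cancel₀ _ (ne_of_gt h)]
    · intro j
      rw [← Finset.sum_mul, ← Finset.sum_div, hbal, div_self (ne_of_gt h), one_mul]

lemma otGlue {n₁ n₂ n₃ : ℕ}
    (U : Fin n₁ → Fin n₂ → ℝ) (V : Fin n₂ → Fin n₃ → ℝ) (W : Fin n₁ → Fin n₃ → ℝ)
    (htri : ∀ i j k, W i k ≤ U i j + V j k)
    (y₁ : Fin n₁ → ℝ) (y₂ : Fin n₂ → ℝ) (y₃ : Fin n₃ → ℝ)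
    (hy₂ : ∀ j, 0 < y₂ j)
    {A : Fin n₁ → Fin n₂ → ℝ} {B : Fin n₂ → Fin n₃ → ℝ}
    (hA : ∀ i j, 0 ≤ A i j) (hArow : ∀ i, ∑ j, A i j = y₁ i)
    (hAcol : ∀ j, ∑ i, A i j = y₂ j)
    (hB : ∀ j k, 0 ≤ B j k) (hBrow : ∀ j, ∑ k, B j k = y₂ j)
    (hBcol : ∀ k, ∑ j, B j k = y₃ k) :
    ∃ c ∈ {c | ∃ Z : Fin n₁ → Fin n₃ → ℝ,
      (∀ i k, 0 ≤ Z i k) ∧ (∀ i, ∑ k, Z i k = y₁ i) ∧ (∀ k, ∑ i, Z i k = y₃ k) ∧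
      c = ∑ i, ∑ k, Z i k * W i k},
      c ≤ (∑ i, ∑ j, A i j * U i j) + (∑ j, ∑ k, B j k * V j k) := by
  have hy2ne : ∀ j, y₂ j ≠ 0 := fun j => (hy₂ j).ne'
  set Z : Fin n₁ → Fin n₃ → ℝ := fun i k => ∑ j, A i j * B j k / y₂ j with hZdef
  have hZnn : ∀ i k, 0 ≤ Z i k := fun i k =>
    Finset.sum_nonneg fun j _ =>
      div_nonneg (mul_nonneg (hA i j) (hB j k)) (hy₂ j).le
  have hZrow : ∀ i, ∑ k, Z i k = y₁ i := by
    intro i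
    rw [hZdef]
    simp only
    rw [Finset.sum_comm]
    calc ∑ j, ∑ k, A i j * B j k / y₂ j
        = ∑ j, A i j * (∑ k, B j k) / y₂ j := by
          refine Finset.sum_congr rfl fun j _ => ?_
          rw [Finset.mul_sum, Finset.sum_div]
      _ = ∑ j, A i j := by
          refine Finset.sum_congr rfl fun j _ => ?_
          rw [hBrow j, mul_div_assoc, div_self (hy2ne j), mul_one]
      _ = y₁ i := hArow i
  have hZcol : ∀ k, ∑ i, Z i k = y₃ k := by
    intro k
    rw [hZdef]
    simp only
    rw [Finset.sum_comm]
    calc ∑ j, ∑ i, A i j * B j k / y₂ j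
        = ∑ j, (∑ i, A i j) * (B j k / y₂ j) := by
          refine Finset.sum_congr rfl fun j _ => ?_
          rw [Finset.sum_mul]
          exact Finset.sum_congr rfl fun i _ => by ring
      _ = ∑ j, B j k := by
          refine Finset.sum_congr rfl fun j _ => ?_
          rw [hAcol j, mul_div_assoc']
          rw [mul_comm, mul_div_assoc, div_self (hy2ne j), mul_one]
      _ = y₃ k := hBcol k
  refine ⟨∑ i, ∑ k, Z i k * W i k, ⟨Z, hZnn, hZrow, hZcol, rfl⟩, ?_⟩
  have key : ∑ i, ∑ k, Z i k * W i k
      ≤ ∑ i, ∑ k, ∑ j, A i j * B j k / y₂ j * (U i j + V j k) := by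
    refine Finset.sum_le_sum fun i _ => Finset.sum_le_sum fun k _ => ?_
    rw [hZdef]
    simp only
    rw [Finset.sum_mul]
    refine Finset.sum_le_sum fun j _ => ?_
    exact mul_le_mul_of_nonneg_left (htri i j k)
      (div_nonneg (mul_nonneg (hA i j) (hB j k)) (hy₂ j).le)
  refine key.trans (le_of_eq ?_)
  calc ∑ i, ∑ k, ∑ j, A i j * B j k / y₂ j * (U i j + V j k)
      = ∑ j, ∑ i, ∑ k, (A i j * U i j * (B j k / y₂ j)
          + (A i j / y₂ j) * (B j k * V j k)) := by
        refine (Finset.sum_congr rfl fun i _ => Finset.sum_comm).trans ?_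
        refine (Finset.sum_comm).trans ?_
        exact Finset.sum_congr rfl fun j _ => Finset.sum_congr rfl fun i _ =>
          Finset.sum_congr rfl fun k _ => by ring
    _ = ∑ j, ((∑ i, A i j * U i j) + ∑ k, B j k * V j k) := by
        refine Finset.sum_congr rfl fun j _ => ?_
        have h1 : ∀ i, ∑ k, (A i j * U i j * (B j k / y₂ j) + (A i j / y₂ j) * (B j k * V j k))
            = A i j * U i j + (A i j / y₂ j) * ∑ k, B j k * V j k := by
          intro i
          rw [Finset.sum_add_distrib, ← Finset.mul_sum, ← Finset.mul_sum, ← Finset.sum_div,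
              hBrow j, div_self (hy2ne j), mul_one]
        calc ∑ i, ∑ k, (A i j * U i j * (B j k / y₂ j) + (A i j / y₂ j) * (B j k * V j k))
            = ∑ i, (A i j * U i j + (A i j / y₂ j) * ∑ k, B j k * V j k) :=
              Finset.sum_congr rfl fun i _ => h1 i
          _ = (∑ i, A i j * U i j) + ∑ k, B j k * V j k := by
              rw [Finset.sum_add_distrib]
              congr 1
              rw [← Finset.sum_mul, ← Finset.sum_div, hAcol j, div_self (hy2ne j), one_mul]
    _ = (∑ i, ∑ j, A i j * U i j) + (∑ j, ∑ k, B j k * V j k) := by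
        rw [Finset.sum_add_distrib, Finset.sum_comm]

/-- Triangle inequality for OT costs induced by a compatible family of cost matrices. -/
theorem otCost_triangle {n₁ n₂ n₃ : ℕ}
    (U : Fin n₁ → Fin n₂ → ℝ) (V : Fin n₂ → Fin n₃ → ℝ) (W : Fin n₁ → Fin n₃ → ℝ)
    (htri : ∀ i j k, W i k ≤ U i j + V j k)
    (y₁ : Fin n₁ → ℝ) (y₂ : Fin n₂ → ℝ) (y₃ : Fin n₃ → ℝ)
    (hy₁ : ∀ i, 0 ≤ y₁ i) (hy₂ : ∀ j, 0 < y₂ j) (hy₃ : ∀ k, 0 ≤ y₃ k)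
    (hbal₁₂ : ∑ i, y₁ i = ∑ j, y₂ j) (hbal₂₃ : ∑ j, y₂ j = ∑ k, y₃ k) :
    otCost W y₁ y₃ ≤ otCost U y₁ y₂ + otCost V y₂ y₃ := by
  have hbal₁₃ : ∑ i, y₁ i = ∑ k, y₃ k := hbal₁₂.trans hbal₂₃
  have hbdd₁₃ := otFeas_bddBelow W y₁ y₃ hy₁
  have hne₁₂ := otFeas_nonempty U y₁ y₂ hy₁ (fun j => (hy₂ j).le) hbal₁₂
  have hne₂₃ := otFeas_nonempty V y₂ y₃ (fun j => (hy₂ j).le) hy₃ hbal₂₃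
  have hmain : ∀ a ∈ {c | ∃ Z : Fin n₁ → Fin n₂ → ℝ,
      (∀ i j, 0 ≤ Z i j) ∧ (∀ i, ∑ j, Z i j = y₁ i) ∧ (∀ j, ∑ i, Z i j = y₂ j) ∧
      c = ∑ i, ∑ j, Z i j * U i j},
      ∀ b ∈ {c | ∃ Z : Fin n₂ → Fin n₃ → ℝ,
      (∀ j k, 0 ≤ Z j k) ∧ (∀ j, ∑ k, Z j k = y₂ j) ∧ (∀ k, ∑ j, Z j k = y₃ k) ∧
      c = ∑ j, ∑ k, Z j k * V j k},
      otCost W y₁ y₃ ≤ a + b := by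
    rintro a ⟨A, hA, hArow, hAcol, rfl⟩ b ⟨B, hB, hBrow, hBcol, rfl⟩
    obtain ⟨c, hc, hcle⟩ := otGlue U V W htri y₁ y₂ y₃ hy₂ hA hArow hAcol hB hBrow hBcol
    exact (csInf_le hbdd₁₃ hc).trans hcle
  have h1 : ∀ b ∈ {c | ∃ Z : Fin n₂ → Fin n₃ → ℝ,
      (∀ j k, 0 ≤ Z j k) ∧ (∀ j, ∑ k, Z j k = y₂ j) ∧ (∀ k, ∑ j, Z j k = y₃ k) ∧
      c = ∑ j, ∑ k, Z j k * V j k},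
      otCost W y₁ y₃ - b ≤ otCost U y₁ y₂ := by
    intro b hb
    refine le_csInf hne₁₂ fun a ha => ?_
    exact sub_le_iff_le_add.mpr (hmain a ha b hb)
  have h2 : otCost W y₁ y₃ - otCost U y₁ y₂ ≤ otCost V y₂ y₃ := by
    refine le_csInf hne₂₃ fun b hb => ?_
    exact sub_le_comm.mp (h1 b hb)
  linarith
end

section
/- Equivalence of the inequality-constrained matching program and the augmented OT program: Let φ(Z) = ⟨Z, C_lmm + C_str⟩ + [Σ_i (y₁(i) − Σ_j Z(i,j)) + Σ_j (y₂(j) − Σ_i Z(i,j))] over nonnegative Z ∈ ℝ^{n₁×n₂} with Σ_j Z(i,j) ≤ y₁(i) and Σ_i Z(i,j) ≤ y₂(j). Let C' ∈ ℝ^{(n₁+1)×(n₂+1)} be obtained by appending to C_lmm + C_str a last row and column equal to the non-assignment costs (value 1 against the extra index, 0 at the corner), with augmented marginals y₁' = (y₁, Σy₂) and y₂' = (y₂, Σy₁). Then the minimum of φ equals the minimum of ⟨Z', C'⟩ over nonnegative Z' with row sums y₁' and column sums y₂', via an objective-preserving bijection between feasible points. -/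
open Finset

/-- The augmented cost matrix: the top-left block is `C`, the appended last row and
column carry non-assignment cost `1`, and the corner costs `0`. -/
noncomputable def augCost {n₁ n₂ : ℕ} (C : Fin n₁ → Fin n₂ → ℝ) :
    Fin (n₁ + 1) → Fin (n₂ + 1) → ℝ := fun i j =>
  if h₁ : (i : ℕ) < n₁ then
    if h₂ : (j : ℕ) < n₂ then C ⟨i, h₁⟩ ⟨j, h₂⟩ else 1
  else
    if (j : ℕ) < n₂ then 1 else 0


lemma augCost_cc {n₁ n₂ : ℕ} (C : Fin n₁ → Fin n₂ → ℝ) (i : Fin n₁) (j : Fin n₂) :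
    augCost C i.castSucc j.castSucc = C i j := by
  simp [augCost]

lemma augCost_cl {n₁ n₂ : ℕ} (C : Fin n₁ → Fin n₂ → ℝ) (i : Fin n₁) :
    augCost C i.castSucc (Fin.last n₂) = 1 := by
  simp [augCost]

lemma augCost_lc {n₁ n₂ : ℕ} (C : Fin n₁ → Fin n₂ → ℝ) (j : Fin n₂) :
    augCost C (Fin.last n₁) j.castSucc = 1 := by
  simp [augCost]

lemma augCost_ll {n₁ n₂ : ℕ} (C : Fin n₁ → Fin n₂ → ℝ) :
    augCost C (Fin.last n₁) (Fin.last n₂) = 0 := by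
  simp [augCost]

/-- Equivalence of the inequality-constrained matching program (with non-assignment
penalty) and the augmented equality-constrained OT program. -/
theorem matching_eq_augmented_ot {n₁ n₂ : ℕ}
    (Clmm Cstr : Fin n₁ → Fin n₂ → ℝ)
    (hClmm : ∀ i j, 0 ≤ Clmm i j) (hCstr : ∀ i j, 0 ≤ Cstr i j)
    (y₁ : Fin n₁ → ℝ) (y₂ : Fin n₂ → ℝ)
    (hy₁ : ∀ i, 0 ≤ y₁ i) (hy₂ : ∀ j, 0 ≤ y₂ j) :
    sInf {c | ∃ Z : Fin n₁ → Fin n₂ → ℝ,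
        (∀ i j, 0 ≤ Z i j) ∧
        (∀ i, ∑ j, Z i j ≤ y₁ i) ∧ (∀ j, ∑ i, Z i j ≤ y₂ j) ∧
        c = (∑ i, ∑ j, Z i j * (Clmm i j + Cstr i j)) +
            ((∑ i, (y₁ i - ∑ j, Z i j)) + (∑ j, (y₂ j - ∑ i, Z i j)))} =
    sInf {c | ∃ Z' : Fin (n₁ + 1) → Fin (n₂ + 1) → ℝ,
        (∀ i j, 0 ≤ Z' i j) ∧
        (∀ i, ∑ j, Z' i j = (Fin.snoc y₁ (∑ j, y₂ j) : Fin (n₁+1) → ℝ) i) ∧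
        (∀ j, ∑ i, Z' i j = (Fin.snoc y₂ (∑ i, y₁ i) : Fin (n₂+1) → ℝ) j) ∧
        c = ∑ i, ∑ j, Z' i j * augCost (fun i j => Clmm i j + Cstr i j) i j} := by
  congr 1
  ext c
  constructor
  · rintro ⟨Z, hZ, hrow, hcol, rfl⟩
    refine ⟨Fin.snoc (fun i => Fin.snoc (Z i) (y₁ i - ∑ j, Z i j))
        (Fin.snoc (fun j => y₂ j - ∑ i, Z i j) (∑ i, ∑ j, Z i j)), ?_, ?_, ?_, ?_⟩
    · intro i j
      refine Fin.lastCases ?_ (fun i => ?_) i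
      · refine Fin.lastCases ?_ (fun j => ?_) j
        · simp
          exact Finset.sum_nonneg fun i _ => Finset.sum_nonneg fun j _ => hZ i j
        · simpa using sub_nonneg.2 (hcol j)
      · refine Fin.lastCases ?_ (fun j => ?_) j
        · simpa using sub_nonneg.2 (hrow i)
        · simpa using hZ i j
    · intro i
      refine Fin.lastCases ?_ (fun i => ?_) i
      · rw [Fin.sum_univ_castSucc]
        simp [Finset.sum_sub_distrib]
        rw [Finset.sum_comm]
        ring
      · rw [Fin.sum_univ_castSucc]
        simp
    · intro j
      refine Fin.lastCases ?_ (fun j => ?_) j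
      · rw [Fin.sum_univ_castSucc]
        simp [Finset.sum_sub_distrib]
      · rw [Fin.sum_univ_castSucc]
        simp
    · simp only [Fin.sum_univ_castSucc, Fin.snoc_castSucc, Fin.snoc_last,
        augCost_cc, augCost_cl, augCost_lc, augCost_ll, mul_one, mul_zero, add_zero]
      simp only [Finset.sum_add_distrib, Finset.sum_sub_distrib]
      ring
  · rintro ⟨Z', hZ', hrow, hcol, rfl⟩
    refine ⟨fun i j => Z' i.castSucc j.castSucc, fun i j => hZ' _ _, ?_, ?_, ?_⟩
    · intro i
      have h := hrow i.castSucc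
      rw [Fin.sum_univ_castSucc] at h
      simp at h
      nlinarith [hZ' i.castSucc (Fin.last n₂)]
    · intro j
      have h := hcol j.castSucc
      rw [Fin.sum_univ_castSucc] at h
      simp at h
      nlinarith [hZ' (Fin.last n₁) j.castSucc]
    · have hr : ∀ i : Fin n₁, Z' i.castSucc (Fin.last n₂) =
          y₁ i - ∑ j : Fin n₂, Z' i.castSucc j.castSucc := by
        intro i
        have h := hrow i.castSucc
        rw [Fin.sum_univ_castSucc] at h
        simp at h
        linarith
      have hc : ∀ j : Fin n₂, Z' (Fin.last n₁) j.castSucc =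
          y₂ j - ∑ i : Fin n₁, Z' i.castSucc j.castSucc := by
        intro j
        have h := hcol j.castSucc
        rw [Fin.sum_univ_castSucc] at h
        simp at h
        linarith
      simp only [Fin.sum_univ_castSucc, augCost_cc, augCost_cl, augCost_lc,
        augCost_ll, mul_one, mul_zero, add_zero]
      simp only [Finset.sum_add_distrib, hr, hc, Finset.sum_sub_distrib]
      ring
end

section
/- The pseudo-distance d obtained as the optimal value of the OT matching program, assuming the label penalty matrix M is symmetric with zero diagonal and satisfies the triangle inequality, is a pseudo-metric on the set of network descriptors: d(G₁,G₂) ≥ 0, d(G₁,G₂) = d(G₂,G₁), d(G,G) = 0, and d(G₁,G₃) ≤ d(G₁,G₂) + d(G₂,G₃). -/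
/-- A network descriptor: a finite set of layers, each with a positive mass, a label
from a label set `L`, and `D` real-valued path-length descriptors. -/
structure NetDesc (L : Type*) (D : ℕ) where
  n : ℕ
  mass : Fin n → ℝ
  mass_pos : ∀ i, 0 < mass i
  label : Fin n → L
  pl : Fin n → Fin D → ℝ

/-- The augmented cost matrix between two network descriptors: label mismatch cost
plus `ν` times the average absolute difference of path-length descriptors on the
top-left block; non-assignment cost `1` in the appended last row/column; `0` at the
corner. -/
noncomputable def augNetCost {L : Type*} {D : ℕ} (M : L → L → ℝ) (ν : ℝ)
    (G₁ G₂ : NetDesc L D) (i : Fin (G₁.n + 1)) (j : Fin (G₂.n + 1)) : ℝ :=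
  if h₁ : (i : ℕ) < G₁.n then
    if h₂ : (j : ℕ) < G₂.n then
      M (G₁.label ⟨i, h₁⟩) (G₂.label ⟨j, h₂⟩) +
        ν * ((∑ t, |G₁.pl ⟨i, h₁⟩ t - G₂.pl ⟨j, h₂⟩ t|) / (D : ℝ))
    else 1
  else if (j : ℕ) < G₂.n then 1 else 0

/-- The OT matching distance between two network descriptors: the infimum of the
transport cost under the augmented cost matrix, with augmented marginals. -/
noncomputable def nnDist {L : Type*} {D : ℕ} (M : L → L → ℝ) (ν : ℝ)
    (G₁ G₂ : NetDesc L D) : ℝ :=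
  sInf {c | ∃ Z : Fin (G₁.n + 1) → Fin (G₂.n + 1) → ℝ,
    (∀ i j, 0 ≤ Z i j) ∧
    (∀ i, ∑ j, Z i j = (Fin.snoc G₁.mass (∑ j, G₂.mass j) : Fin (G₁.n + 1) → ℝ) i) ∧
    (∀ j, ∑ i, Z i j = (Fin.snoc G₂.mass (∑ i, G₁.mass i) : Fin (G₂.n + 1) → ℝ) j) ∧
    c = ∑ i, ∑ j, Z i j * augNetCost M ν G₁ G₂ i j}

section Aux

variable {L : Type*} {D : ℕ} (M : L → L → ℝ) (ν : ℝ)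

lemma augNetCost_castSucc_castSucc (G₁ G₂ : NetDesc L D) (i : Fin G₁.n) (j : Fin G₂.n) :
    augNetCost M ν G₁ G₂ i.castSucc j.castSucc =
      M (G₁.label i) (G₂.label j) +
        ν * ((∑ t, |G₁.pl i t - G₂.pl j t|) / (D : ℝ)) := by
  simp [augNetCost, i.isLt, j.isLt]

lemma augNetCost_castSucc_last (G₁ G₂ : NetDesc L D) (i : Fin G₁.n) :
    augNetCost M ν G₁ G₂ i.castSucc (Fin.last G₂.n) = 1 := by
  simp [augNetCost, i.isLt]

lemma augNetCost_last_castSucc (G₁ G₂ : NetDesc L D) (j : Fin G₂.n) :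
    augNetCost M ν G₁ G₂ (Fin.last G₁.n) j.castSucc = 1 := by
  simp [augNetCost, j.isLt]

lemma augNetCost_last_last (G₁ G₂ : NetDesc L D) :
    augNetCost M ν G₁ G₂ (Fin.last G₁.n) (Fin.last G₂.n) = 0 := by
  simp [augNetCost]

lemma augNetCost_nonneg (hν : 0 ≤ ν) (hM0 : ∀ x y, 0 ≤ M x y) (G₁ G₂ : NetDesc L D)
    (i : Fin (G₁.n + 1)) (j : Fin (G₂.n + 1)) : 0 ≤ augNetCost M ν G₁ G₂ i j := by
  unfold augNetCost
  split_ifs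
  · exact add_nonneg (hM0 _ _) (mul_nonneg hν (div_nonneg
      (Finset.sum_nonneg fun t _ => abs_nonneg _) (Nat.cast_nonneg _)))
  · exact zero_le_one
  · exact zero_le_one
  · exact le_refl _

lemma augNetCost_symm (hsymm : ∀ x y, M x y = M y x) (G₁ G₂ : NetDesc L D)
    (i : Fin (G₁.n + 1)) (j : Fin (G₂.n + 1)) :
    augNetCost M ν G₁ G₂ i j = augNetCost M ν G₂ G₁ j i := by
  unfold augNetCost
  split_ifs
  · have h : ∀ (a b : Fin D → ℝ), (∑ t, |a t - b t|) = ∑ t, |b t - a t| :=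
      fun a b => Finset.sum_congr rfl (fun t _ => abs_sub_comm (a t) (b t))
    rw [hsymm, h]
  · rfl
  · rfl
  · rfl

end Aux
section Tri

variable {L : Type*} {D : ℕ} (M : L → L → ℝ) (ν : ℝ)

lemma augNetCost_triangle (hν : 0 ≤ ν) (hM0 : ∀ x y, 0 ≤ M x y)
    (htri : ∀ x y z, M x z ≤ M x y + M y z) (G₁ G₂ G₃ : NetDesc L D)
    (i : Fin (G₁.n + 1)) (j : Fin G₂.n) (k : Fin (G₃.n + 1)) :
    augNetCost M ν G₁ G₃ i k ≤
      augNetCost M ν G₁ G₂ i j.castSucc + augNetCost M ν G₂ G₃ j.castSucc k := by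
  induction i using Fin.lastCases with
  | last =>
    induction k using Fin.lastCases with
    | last =>
      rw [augNetCost_last_last, augNetCost_last_castSucc, augNetCost_castSucc_last]
      norm_num
    | cast k =>
      rw [augNetCost_last_castSucc, augNetCost_last_castSucc, augNetCost_castSucc_castSucc]
      have := augNetCost_nonneg M ν hν hM0 G₂ G₃ j.castSucc k.castSucc
      rw [augNetCost_castSucc_castSucc] at this
      linarith
  | cast i =>
    induction k using Fin.lastCases with
    | last =>
      rw [augNetCost_castSucc_last, augNetCost_castSucc_last]
      have := augNetCost_nonneg M ν hν hM0 G₁ G₂ i.castSucc j.castSucc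
      linarith
    | cast k =>
      rw [augNetCost_castSucc_castSucc, augNetCost_castSucc_castSucc,
        augNetCost_castSucc_castSucc]
      have h1 : (∑ t, |G₁.pl i t - G₃.pl k t|) ≤
          (∑ t, |G₁.pl i t - G₂.pl j t|) + ∑ t, |G₂.pl j t - G₃.pl k t| := by
        rw [← Finset.sum_add_distrib]
        exact Finset.sum_le_sum fun t _ => abs_sub_le _ _ _
      have h2 : ν * ((∑ t, |G₁.pl i t - G₃.pl k t|) / (D : ℝ)) ≤
          ν * (((∑ t, |G₁.pl i t - G₂.pl j t|) + ∑ t, |G₂.pl j t - G₃.pl k t|) / (D : ℝ)) := by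
        apply mul_le_mul_of_nonneg_left _ hν
        rw [div_eq_mul_inv, div_eq_mul_inv]
        exact mul_le_mul_of_nonneg_right h1 (inv_nonneg.2 (Nat.cast_nonneg _))
      have h3 : (((∑ t, |G₁.pl i t - G₂.pl j t|) + ∑ t, |G₂.pl j t - G₃.pl k t|) / (D : ℝ))
          = (∑ t, |G₁.pl i t - G₂.pl j t|) / (D : ℝ) + (∑ t, |G₂.pl j t - G₃.pl k t|) / (D : ℝ) :=
        add_div _ _ _
      have h4 := htri (G₁.label i) (G₂.label j) (G₃.label k)
      rw [h3, mul_add] at h2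
      linarith

end Tri
section Sets

variable {L : Type*} {D : ℕ} (M : L → L → ℝ) (ν : ℝ)

/-- The set of achievable transport costs. -/
def costSet (G₁ G₂ : NetDesc L D) : Set ℝ :=
  {c | ∃ Z : Fin (G₁.n + 1) → Fin (G₂.n + 1) → ℝ,
    (∀ i j, 0 ≤ Z i j) ∧
    (∀ i, ∑ j, Z i j = (Fin.snoc G₁.mass (∑ j, G₂.mass j) : Fin (G₁.n + 1) → ℝ) i) ∧
    (∀ j, ∑ i, Z i j = (Fin.snoc G₂.mass (∑ i, G₁.mass i) : Fin (G₂.n + 1) → ℝ) j) ∧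
    c = ∑ i, ∑ j, Z i j * augNetCost M ν G₁ G₂ i j}

lemma nnDist_eq_sInf (G₁ G₂ : NetDesc L D) :
    nnDist M ν G₁ G₂ = sInf (costSet M ν G₁ G₂) := rfl

lemma costSet_nonneg (hν : 0 ≤ ν) (hM0 : ∀ x y, 0 ≤ M x y) (G₁ G₂ : NetDesc L D) :
    ∀ c ∈ costSet M ν G₁ G₂, 0 ≤ c := by
  rintro c ⟨Z, hpos, -, -, rfl⟩
  exact Finset.sum_nonneg fun i _ => Finset.sum_nonneg fun j _ =>
    mul_nonneg (hpos i j) (augNetCost_nonneg M ν hν hM0 G₁ G₂ i j)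

lemma costSet_nonempty (G₁ G₂ : NetDesc L D) : (costSet M ν G₁ G₂).Nonempty := by
  classical
  refine ⟨_, ⟨fun i j =>
    if h₁ : (i : ℕ) < G₁.n then
      (if (j : ℕ) < G₂.n then 0 else G₁.mass ⟨i, h₁⟩)
    else (if h₂ : (j : ℕ) < G₂.n then G₂.mass ⟨j, h₂⟩ else 0), ?_, ?_, ?_, rfl⟩⟩
  · intro i j
    dsimp only
    split_ifs
    · exact le_refl _
    · exact (G₁.mass_pos _).le
    · exact (G₂.mass_pos _).le
    · exact le_refl _
  · intro i
    induction i using Fin.lastCases with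
    | last => simp [Fin.sum_univ_castSucc]
    | cast i => simp [Fin.sum_univ_castSucc, i.isLt]
  · intro j
    induction j using Fin.lastCases with
    | last => simp [Fin.sum_univ_castSucc]
    | cast j => simp [Fin.sum_univ_castSucc, j.isLt]

end Sets
section SymmSelf

variable {L : Type*} {D : ℕ} (M : L → L → ℝ) (ν : ℝ)

lemma costSet_subset_symm (hsymm : ∀ x y, M x y = M y x) (G₁ G₂ : NetDesc L D) :
    costSet M ν G₁ G₂ ⊆ costSet M ν G₂ G₁ := by
  rintro c ⟨Z, hpos, hrow, hcol, rfl⟩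
  refine ⟨fun j i => Z i j, fun j i => hpos i j, hcol, hrow, ?_⟩
  rw [Finset.sum_comm]
  exact Finset.sum_congr rfl fun i _ => Finset.sum_congr rfl fun j _ => by
    rw [augNetCost_symm M ν hsymm]

lemma costSet_symm (hsymm : ∀ x y, M x y = M y x) (G₁ G₂ : NetDesc L D) :
    costSet M ν G₁ G₂ = costSet M ν G₂ G₁ :=
  Set.Subset.antisymm (costSet_subset_symm M ν hsymm G₁ G₂)
    (costSet_subset_symm M ν hsymm G₂ G₁)

lemma zero_mem_costSet_self (hdiag : ∀ x, M x x = 0) (G : NetDesc L D) :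
    (0 : ℝ) ∈ costSet M ν G G := by
  classical
  have hw : ∀ i : Fin (G.n + 1),
      0 ≤ (Fin.snoc G.mass (∑ t, G.mass t) : Fin (G.n + 1) → ℝ) i := fun i =>
    Fin.lastCases (by simpa using Finset.sum_nonneg fun t _ => (G.mass_pos t).le)
      (fun i => by simpa using (G.mass_pos i).le) i
  have hC : ∀ i, augNetCost M ν G G i i = 0 := fun i =>
    Fin.lastCases (augNetCost_last_last M ν G G)
      (fun i => by rw [augNetCost_castSucc_castSucc]; simp [hdiag]) i
  refine ⟨fun i j =>
    if i = j then (Fin.snoc G.mass (∑ t, G.mass t) : Fin (G.n + 1) → ℝ) i else 0,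
    ?_, ?_, ?_, ?_⟩
  · intro i j
    dsimp only
    split_ifs with h
    · exact hw i
    · exact le_refl _
  · intro i
    simp
  · intro j
    simp
  · symm
    simp [ite_mul, hC]

end SymmSelf
section Glue

variable {L : Type*} {D : ℕ} (M : L → L → ℝ) (ν : ℝ)

lemma glue_inner_sum {n : ℕ} (z c : Fin n → ℝ) (a C m : ℝ) (hm : m ≠ 0)
    (hsum : (∑ k, z k) = m) :
    ∑ k, (a * z k / m) * (C + c k) = a * C + (a / m) * ∑ k, z k * c k := by
  have h : ∀ k : Fin n, (a * z k / m) * (C + c k) =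
      (a * C / m) * z k + (a / m) * (z k * c k) := by
    intro k; field_simp
  rw [Finset.sum_congr rfl fun k _ => h k, Finset.sum_add_distrib, ← Finset.mul_sum,
    ← Finset.mul_sum, hsum, div_mul_cancel₀ _ hm]

lemma costSet_triangle (hν : 0 ≤ ν) (hM0 : ∀ x y, 0 ≤ M x y)
    (htri : ∀ x y z, M x z ≤ M x y + M y z) (G₁ G₂ G₃ : NetDesc L D)
    {c₁ c₂ : ℝ} (hc₁ : c₁ ∈ costSet M ν G₁ G₂) (hc₂ : c₂ ∈ costSet M ν G₂ G₃) :
    ∃ c₃ ∈ costSet M ν G₁ G₃, c₃ ≤ c₁ + c₂ := by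
  classical
  obtain ⟨A, hA0, hArow, hAcol, rfl⟩ := hc₁
  obtain ⟨W, hW0, hWrow, hWcol, rfl⟩ := hc₂
  have hne : ∀ j : Fin G₂.n, G₂.mass j ≠ 0 := fun j => (G₂.mass_pos j).ne'
  -- marginal equations in convenient form
  have hArow' : ∀ i : Fin G₁.n, ∑ j, A i.castSucc j = G₁.mass i := fun i => by
    have := hArow i.castSucc; rwa [Fin.snoc_castSucc] at this
  have hArowl : ∑ j, A (Fin.last G₁.n) j = ∑ j, G₂.mass j := by
    have := hArow (Fin.last G₁.n); rwa [Fin.snoc_last] at this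
  have hAcol' : ∀ j : Fin G₂.n, ∑ i, A i j.castSucc = G₂.mass j := fun j => by
    have := hAcol j.castSucc; rwa [Fin.snoc_castSucc] at this
  have hAcoll : ∑ i, A i (Fin.last G₂.n) = ∑ i, G₁.mass i := by
    have := hAcol (Fin.last G₂.n); rwa [Fin.snoc_last] at this
  have hWrow' : ∀ j : Fin G₂.n, ∑ k, W j.castSucc k = G₂.mass j := fun j => by
    have := hWrow j.castSucc; rwa [Fin.snoc_castSucc] at this
  have hWrowl : ∑ k, W (Fin.last G₂.n) k = ∑ k, G₃.mass k := by
    have := hWrow (Fin.last G₂.n); rwa [Fin.snoc_last] at this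
  have hWcol' : ∀ k : Fin G₃.n, ∑ j, W j k.castSucc = G₃.mass k := fun k => by
    have := hWcol k.castSucc; rwa [Fin.snoc_castSucc] at this
  have hWcoll : ∑ j, W j (Fin.last G₃.n) = ∑ j, G₂.mass j := by
    have := hWcol (Fin.last G₃.n); rwa [Fin.snoc_last] at this
  -- the glued part
  set B : Fin (G₁.n + 1) → Fin (G₃.n + 1) → ℝ :=
    fun i k => ∑ j : Fin G₂.n, A i j.castSucc * W j.castSucc k / G₂.mass j with hBdef
  set P : ℝ := ∑ j : Fin G₂.n, A (Fin.last G₁.n) j.castSucc with hPdef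
  set E : Fin (G₁.n + 1) → Fin (G₃.n + 1) → ℝ :=
    fun i k => if (i : ℕ) < G₁.n then (if (k : ℕ) < G₃.n then 0 else A i (Fin.last G₂.n))
      else (if (k : ℕ) < G₃.n then W (Fin.last G₂.n) k
        else W (Fin.last G₂.n) (Fin.last G₃.n) - P) with hEdef
  set Z : Fin (G₁.n + 1) → Fin (G₃.n + 1) → ℝ := fun i k => B i k + E i k with hZdef
  have hB0 : ∀ i k, 0 ≤ B i k := fun i k => Finset.sum_nonneg fun j _ =>
    div_nonneg (mul_nonneg (hA0 _ _) (hW0 _ _)) (G₂.mass_pos j).le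
  -- row sums of B
  have hBrowSum : ∀ i, ∑ k, B i k = ∑ j : Fin G₂.n, A i j.castSucc := by
    intro i
    simp only [hBdef]
    rw [Finset.sum_comm]
    refine Finset.sum_congr rfl fun j _ => ?_
    rw [← Finset.sum_div, ← Finset.mul_sum, hWrow' j, mul_div_assoc, div_self (hne j), mul_one]
  -- column sums of B
  have hBcolSum : ∀ k, ∑ i, B i k = ∑ j : Fin G₂.n, W j.castSucc k := by
    intro k
    simp only [hBdef]
    rw [Finset.sum_comm]
    refine Finset.sum_congr rfl fun j _ => ?_
    rw [← Finset.sum_div, ← Finset.sum_mul, hAcol' j, mul_comm, mul_div_assoc,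
      div_self (hne j), mul_one]
  -- the corner is nonnegative
  have hcorner : P - B (Fin.last G₁.n) (Fin.last G₃.n) ≤ W (Fin.last G₂.n) (Fin.last G₃.n) := by
    have expand : P - B (Fin.last G₁.n) (Fin.last G₃.n) =
        ∑ j : Fin G₂.n, (A (Fin.last G₁.n) j.castSucc -
          A (Fin.last G₁.n) j.castSucc * W j.castSucc (Fin.last G₃.n) / G₂.mass j) := by
      simp only [hBdef, hPdef]
      rw [← Finset.sum_sub_distrib]
    have bound : ∀ j : Fin G₂.n, A (Fin.last G₁.n) j.castSucc -
        A (Fin.last G₁.n) j.castSucc * W j.castSucc (Fin.last G₃.n) / G₂.mass j ≤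
        G₂.mass j - W j.castSucc (Fin.last G₃.n) := by
      intro j
      have hmj := G₂.mass_pos j
      have ha : A (Fin.last G₁.n) j.castSucc ≤ G₂.mass j := by
        rw [← hAcol' j]
        exact Finset.single_le_sum (fun i _ => hA0 i _) (Finset.mem_univ _)
      have hw : W j.castSucc (Fin.last G₃.n) ≤ G₂.mass j := by
        rw [← hWrow' j]
        exact Finset.single_le_sum (fun k _ => hW0 _ k) (Finset.mem_univ _)
      have h1 : 0 ≤ A (Fin.last G₁.n) j.castSucc := hA0 _ _
      have h2 : 0 ≤ W j.castSucc (Fin.last G₃.n) := hW0 _ _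
      have hrw : A (Fin.last G₁.n) j.castSucc -
          A (Fin.last G₁.n) j.castSucc * W j.castSucc (Fin.last G₃.n) / G₂.mass j =
          A (Fin.last G₁.n) j.castSucc * (G₂.mass j - W j.castSucc (Fin.last G₃.n)) / G₂.mass j := by
        field_simp
      rw [hrw, div_le_iff₀ hmj]
      nlinarith [mul_le_mul_of_nonneg_right ha (sub_nonneg.2 hw)]
    have hlast : ∑ j : Fin G₂.n, (G₂.mass j - W j.castSucc (Fin.last G₃.n)) =
        W (Fin.last G₂.n) (Fin.last G₃.n) := by
      rw [Finset.sum_sub_distrib]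
      have h := hWcoll
      rw [Fin.sum_univ_castSucc] at h
      linarith
    calc P - B (Fin.last G₁.n) (Fin.last G₃.n)
        = _ := expand
      _ ≤ ∑ j : Fin G₂.n, (G₂.mass j - W j.castSucc (Fin.last G₃.n)) :=
          Finset.sum_le_sum fun j _ => bound j
      _ = _ := hlast
  -- Z is nonnegative
  have hZ0 : ∀ i k, 0 ≤ Z i k := by
    intro i k
    simp only [hZdef, hEdef]
    by_cases hi : (i : ℕ) < G₁.n
    · by_cases hk : (k : ℕ) < G₃.n
      · simp only [hi, hk, if_true]
        exact add_nonneg (hB0 i k) (le_refl 0)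
      · simp only [hi, hk, if_true, if_false]
        exact add_nonneg (hB0 i k) (hA0 _ _)
    · by_cases hk : (k : ℕ) < G₃.n
      · simp only [hi, hk, if_true, if_false]
        exact add_nonneg (hB0 i k) (hW0 _ _)
      · have hi' : i = Fin.last G₁.n := by
          apply Fin.ext
          simpa [Fin.val_last] using Nat.le_antisymm (Nat.lt_succ_iff.mp i.isLt) (Nat.le_of_not_lt hi)
        have hk' : k = Fin.last G₃.n := by
          apply Fin.ext
          simpa [Fin.val_last] using Nat.le_antisymm (Nat.lt_succ_iff.mp k.isLt) (Nat.le_of_not_lt hk)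
        subst hi'; subst hk'
        simp only [hi, hk, if_false]
        have := hcorner
        linarith [hB0 (Fin.last G₁.n) (Fin.last G₃.n)]
  -- row marginals of Z
  have hZrow : ∀ i, ∑ k, Z i k =
      (Fin.snoc G₁.mass (∑ k, G₃.mass k) : Fin (G₁.n + 1) → ℝ) i := by
    intro i
    induction i using Fin.lastCases with
    | last =>
      rw [Fin.snoc_last]
      simp only [hZdef]
      rw [Finset.sum_add_distrib, hBrowSum]
      have hE : ∑ k, E (Fin.last G₁.n) k =
          (∑ k, G₃.mass k) - P := by
        simp only [hEdef]
        rw [Fin.sum_univ_castSucc]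
        simp only [lt_irrefl, if_false, Fin.coe_castSucc, Fin.is_lt, if_true, Fin.val_last]
        have h := hWrowl
        rw [Fin.sum_univ_castSucc] at h
        linarith
      rw [hE, hPdef]
      ring
    | cast i =>
      rw [Fin.snoc_castSucc]
      simp only [hZdef]
      rw [Finset.sum_add_distrib, hBrowSum]
      have hE : ∑ k, E i.castSucc k = A i.castSucc (Fin.last G₂.n) := by
        simp only [hEdef]
        rw [Fin.sum_univ_castSucc]
        simp [i.isLt]
      rw [hE]
      have h := hArow' i
      rw [Fin.sum_univ_castSucc] at h
      linarith
  -- column marginals of Z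
  have hZcol : ∀ k, ∑ i, Z i k =
      (Fin.snoc G₃.mass (∑ i, G₁.mass i) : Fin (G₃.n + 1) → ℝ) k := by
    intro k
    induction k using Fin.lastCases with
    | last =>
      rw [Fin.snoc_last]
      simp only [hZdef]
      rw [Finset.sum_add_distrib, hBcolSum]
      have hE : ∑ i, E i (Fin.last G₃.n) =
          (∑ i : Fin G₁.n, A i.castSucc (Fin.last G₂.n)) +
            (W (Fin.last G₂.n) (Fin.last G₃.n) - P) := by
        simp only [hEdef]
        rw [Fin.sum_univ_castSucc]
        simp only [lt_irrefl, if_false, Fin.coe_castSucc, Fin.is_lt, if_true, Fin.val_last]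
      rw [hE]
      have h1 := hAcoll
      rw [Fin.sum_univ_castSucc] at h1
      have h2 := hWcoll
      rw [Fin.sum_univ_castSucc] at h2
      have h3 := hArowl
      rw [Fin.sum_univ_castSucc] at h3
      rw [hPdef]
      linarith
    | cast k =>
      rw [Fin.snoc_castSucc]
      simp only [hZdef]
      rw [Finset.sum_add_distrib, hBcolSum]
      have hE : ∑ i, E i k.castSucc = W (Fin.last G₂.n) k.castSucc := by
        simp only [hEdef]
        rw [Fin.sum_univ_castSucc]
        simp [k.isLt]
      rw [hE]
      have h := hWcol' k
      rw [Fin.sum_univ_castSucc] at h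
      linarith
  refine ⟨∑ i, ∑ k, Z i k * augNetCost M ν G₁ G₃ i k, ⟨Z, hZ0, hZrow, hZcol, rfl⟩, ?_⟩
  -- the cost inequality
  set S : Fin G₂.n → ℝ :=
    fun j => ∑ k, W j.castSucc k * augNetCost M ν G₂ G₃ j.castSucc k with hSdef
  have part1 : ∑ i, ∑ k, B i k * augNetCost M ν G₁ G₃ i k ≤
      (∑ i, ∑ j : Fin G₂.n, A i j.castSucc * augNetCost M ν G₁ G₂ i j.castSucc) +
        ∑ j : Fin G₂.n, S j := by
    have h1 : ∀ i k, B i k * augNetCost M ν G₁ G₃ i k ≤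
        ∑ j : Fin G₂.n, (A i j.castSucc * W j.castSucc k / G₂.mass j) *
          (augNetCost M ν G₁ G₂ i j.castSucc + augNetCost M ν G₂ G₃ j.castSucc k) := by
      intro i k
      simp only [hBdef]
      rw [Finset.sum_mul]
      exact Finset.sum_le_sum fun j _ => mul_le_mul_of_nonneg_left
        (augNetCost_triangle M ν hν hM0 htri G₁ G₂ G₃ i j k)
        (div_nonneg (mul_nonneg (hA0 _ _) (hW0 _ _)) (G₂.mass_pos j).le)
    calc ∑ i, ∑ k, B i k * augNetCost M ν G₁ G₃ i k
        ≤ ∑ i, ∑ k, ∑ j : Fin G₂.n, (A i j.castSucc * W j.castSucc k / G₂.mass j) *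
            (augNetCost M ν G₁ G₂ i j.castSucc + augNetCost M ν G₂ G₃ j.castSucc k) :=
          Finset.sum_le_sum fun i _ => Finset.sum_le_sum fun k _ => h1 i k
      _ = ∑ i, ∑ j : Fin G₂.n, ∑ k, (A i j.castSucc * W j.castSucc k / G₂.mass j) *
            (augNetCost M ν G₁ G₂ i j.castSucc + augNetCost M ν G₂ G₃ j.castSucc k) :=
          Finset.sum_congr rfl fun i _ => Finset.sum_comm
      _ = ∑ i, ∑ j : Fin G₂.n, (A i j.castSucc * augNetCost M ν G₁ G₂ i j.castSucc +
            (A i j.castSucc / G₂.mass j) * S j) := by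
          refine Finset.sum_congr rfl fun i _ => Finset.sum_congr rfl fun j _ => ?_
          exact glue_inner_sum (fun k => W j.castSucc k)
            (fun k => augNetCost M ν G₂ G₃ j.castSucc k) (A i j.castSucc)
            (augNetCost M ν G₁ G₂ i j.castSucc) (G₂.mass j) (hne j) (hWrow' j)
      _ = (∑ i, ∑ j : Fin G₂.n, A i j.castSucc * augNetCost M ν G₁ G₂ i j.castSucc) +
            ∑ i, ∑ j : Fin G₂.n, (A i j.castSucc / G₂.mass j) * S j := by
          rw [← Finset.sum_add_distrib]
          exact Finset.sum_congr rfl fun i _ => Finset.sum_add_distrib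
      _ = (∑ i, ∑ j : Fin G₂.n, A i j.castSucc * augNetCost M ν G₁ G₂ i j.castSucc) +
            ∑ j : Fin G₂.n, S j := by
          congr 1
          rw [Finset.sum_comm]
          refine Finset.sum_congr rfl fun j _ => ?_
          simp only [div_mul_eq_mul_div, ← Finset.sum_div]
          rw [← Finset.sum_mul, hAcol' j, mul_comm, mul_div_assoc, div_self (hne j), mul_one]
  have part2 : ∑ i, ∑ k, E i k * augNetCost M ν G₁ G₃ i k =
      (∑ i : Fin G₁.n, A i.castSucc (Fin.last G₂.n)) +
        ∑ k : Fin G₃.n, W (Fin.last G₂.n) k.castSucc := by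
    rw [Fin.sum_univ_castSucc]
    have hfirst : ∀ i : Fin G₁.n, ∑ k, E i.castSucc k * augNetCost M ν G₁ G₃ i.castSucc k =
        A i.castSucc (Fin.last G₂.n) := by
      intro i
      rw [Fin.sum_univ_castSucc]
      simp only [hEdef]
      simp [i.isLt, augNetCost_castSucc_last]
    have hsecond : ∑ k, E (Fin.last G₁.n) k * augNetCost M ν G₁ G₃ (Fin.last G₁.n) k =
        ∑ k : Fin G₃.n, W (Fin.last G₂.n) k.castSucc := by
      rw [Fin.sum_univ_castSucc]
      simp only [hEdef]
      simp [augNetCost_last_castSucc, augNetCost_last_last]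
    rw [Finset.sum_congr rfl fun i _ => hfirst i, hsecond]
  -- decompose c₁ and c₂
  have hc1 : ∑ i, ∑ j, A i j * augNetCost M ν G₁ G₂ i j =
      (∑ i, ∑ j : Fin G₂.n, A i j.castSucc * augNetCost M ν G₁ G₂ i j.castSucc) +
        ∑ i : Fin G₁.n, A i.castSucc (Fin.last G₂.n) := by
    rw [Finset.sum_congr rfl fun i (_ : i ∈ Finset.univ) =>
      Fin.sum_univ_castSucc fun j => A i j * augNetCost M ν G₁ G₂ i j,
      Finset.sum_add_distrib]
    congr 1
    rw [Fin.sum_univ_castSucc]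
    simp [augNetCost_castSucc_last, augNetCost_last_last]
  have hc2 : ∑ j, ∑ k, W j k * augNetCost M ν G₂ G₃ j k =
      (∑ j : Fin G₂.n, S j) + ∑ k : Fin G₃.n, W (Fin.last G₂.n) k.castSucc := by
    rw [Fin.sum_univ_castSucc]
    congr 1
    rw [Fin.sum_univ_castSucc]
    simp [augNetCost_last_castSucc, augNetCost_last_last]
  have hcost : ∑ i, ∑ k, Z i k * augNetCost M ν G₁ G₃ i k =
      (∑ i, ∑ k, B i k * augNetCost M ν G₁ G₃ i k) +
        ∑ i, ∑ k, E i k * augNetCost M ν G₁ G₃ i k := by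
    simp only [hZdef, add_mul]
    rw [← Finset.sum_add_distrib]
    exact Finset.sum_congr rfl fun i _ => Finset.sum_add_distrib
  rw [hcost, hc1, hc2, part2]
  linarith [part1]

end Glue
/-- The OT matching distance is a pseudo-metric on network descriptors, provided the
label penalty matrix `M` is nonnegative, symmetric, has zero diagonal, and satisfies
the triangle inequality, and `ν > 0`. -/
theorem nnDist_pseudometric {L : Type*} {D : ℕ} (M : L → L → ℝ) (ν : ℝ)
    (hν : 0 < ν)
    (hM0 : ∀ x y, 0 ≤ M x y)
    (hdiag : ∀ x, M x x = 0)
    (hsymm : ∀ x y, M x y = M y x)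
    (htri : ∀ x y z, M x z ≤ M x y + M y z) :
    ∀ G₁ G₂ G₃ : NetDesc L D,
      0 ≤ nnDist M ν G₁ G₂ ∧
      nnDist M ν G₁ G₂ = nnDist M ν G₂ G₁ ∧
      nnDist M ν G₁ G₁ = 0 ∧
      nnDist M ν G₁ G₃ ≤ nnDist M ν G₁ G₂ + nnDist M ν G₂ G₃ := by
  intro G₁ G₂ G₃
  have hnn : ∀ G G' : NetDesc L D, ∀ c ∈ costSet M ν G G', (0:ℝ) ≤ c := fun G G' =>
    costSet_nonneg M ν hν.le hM0 G G'
  have hbdd : ∀ G G' : NetDesc L D, BddBelow (costSet M ν G G') := fun G G' =>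
    ⟨0, fun c hc => hnn G G' c hc⟩
  refine ⟨?_, ?_, ?_, ?_⟩
  · rw [nnDist_eq_sInf]
    exact Real.sInf_nonneg (hnn G₁ G₂)
  · rw [nnDist_eq_sInf, nnDist_eq_sInf, costSet_symm M ν hsymm]
  · rw [nnDist_eq_sInf]
    refine le_antisymm (csInf_le (hbdd G₁ G₁) (zero_mem_costSet_self M ν hdiag G₁))
      (Real.sInf_nonneg (hnn G₁ G₁))
  · rw [nnDist_eq_sInf, nnDist_eq_sInf, nnDist_eq_sInf]
    have hkey : ∀ c₁ ∈ costSet M ν G₁ G₂, ∀ c₂ ∈ costSet M ν G₂ G₃,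
        sInf (costSet M ν G₁ G₃) ≤ c₁ + c₂ := by
      intro c₁ h₁ c₂ h₂
      obtain ⟨c₃, hm, hle⟩ := costSet_triangle M ν hν.le hM0 htri G₁ G₂ G₃ h₁ h₂
      exact (csInf_le (hbdd G₁ G₃) hm).trans hle
    have h1 : ∀ c₂ ∈ costSet M ν G₂ G₃,
        sInf (costSet M ν G₁ G₃) ≤ sInf (costSet M ν G₁ G₂) + c₂ := by
      intro c₂ h₂
      have h : ∀ c₁ ∈ costSet M ν G₁ G₂, sInf (costSet M ν G₁ G₃) - c₂ ≤ c₁ :=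
        fun c₁ h₁ => by linarith [hkey c₁ h₁ c₂ h₂]
      have := le_csInf (costSet_nonempty M ν G₁ G₂) h
      linarith
    have h2 : ∀ c₂ ∈ costSet M ν G₂ G₃,
        sInf (costSet M ν G₁ G₃) - sInf (costSet M ν G₁ G₂) ≤ c₂ :=
      fun c₂ h₂ => by linarith [h1 c₂ h₂]
    have := le_csInf (costSet_nonempty M ν G₂ G₃) h2
    linarith
end
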